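/- arXiv:math/0407409 — 2 statements merged into one kernel-verified Lean document; each statement's English description precedes it below -/
import Mathlib

section
/- Final step of the proof of Theorem 2: Let (x(·), u(·), ψ₀, ψ(·), λ(·)) be a Pontryagin extremal on [a,b], and let a(t) := (∂T/∂s)(t,x(t),u(t),0) ∈ ℝ and b(t) := (∂X/∂s)(t,x(t),u(t),0) ∈ ℝⁿ be differentiable functions on [a,b]. Suppose that for all t ∈ [a,b]: ψ₀·[(∂L/∂t)·a(t) + ⟨∂L/∂x, b(t)⟩ + L·ȧ(t)] + ⟨ψ(t), (∂φ/∂t)·a(t) + (∂φ/∂x)·b(t) + φ·ȧ(t) − ḃ(t)⟩ + ⟨λ(t), (∂ϕ/∂t)·a(t) + (∂ϕ/∂x)·b(t) + ϕ·ȧ(t)⟩ = 0, where all partial derivatives of L, φ, ϕ are evaluated at (t,x(t),u(t)). Then (d/dt)[⟨ψ(t), b(t)⟩ − H(t,x(t),u(t),ψ₀,ψ(t),λ(t))·a(t)] = 0 for all t ∈ [a,b], and hence t ↦ ⟨ψ(t), b(t)⟩ − H(t,x(t),u(t),ψ₀,ψ(t),λ(t))·a(t) is constant on [a,b]. -/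
open Set RealInnerProductSpace

/-- The Hamiltonian of the constrained optimal control problem. -/
noncomputable def Ham {n r m : ℕ}
    (L : ℝ × EuclideanSpace ℝ (Fin n) × EuclideanSpace ℝ (Fin r) → ℝ)
    (φ : ℝ × EuclideanSpace ℝ (Fin n) × EuclideanSpace ℝ (Fin r) → EuclideanSpace ℝ (Fin n))
    (ϕ : ℝ × EuclideanSpace ℝ (Fin n) × EuclideanSpace ℝ (Fin r) → EuclideanSpace ℝ (Fin m))
    (t : ℝ) (x : EuclideanSpace ℝ (Fin n)) (u : EuclideanSpace ℝ (Fin r))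
    (ψ₀ : ℝ) (ψ : EuclideanSpace ℝ (Fin n)) (lam : EuclideanSpace ℝ (Fin m)) : ℝ :=
  ψ₀ * L (t, x, u) + ⟪ψ, φ (t, x, u)⟫ + ⟪lam, ϕ (t, x, u)⟫

/-- A Pontryagin extremal of the constrained optimal control problem on `[a,b]`. -/
noncomputable def IsPontryaginExtremal {n r m : ℕ}
    (L : ℝ × EuclideanSpace ℝ (Fin n) × EuclideanSpace ℝ (Fin r) → ℝ)
    (φ : ℝ × EuclideanSpace ℝ (Fin n) × EuclideanSpace ℝ (Fin r) → EuclideanSpace ℝ (Fin n))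
    (ϕ : ℝ × EuclideanSpace ℝ (Fin n) × EuclideanSpace ℝ (Fin r) → EuclideanSpace ℝ (Fin m))
    (a b : ℝ)
    (x : ℝ → EuclideanSpace ℝ (Fin n)) (u : ℝ → EuclideanSpace ℝ (Fin r))
    (ψ₀ : ℝ) (ψ : ℝ → EuclideanSpace ℝ (Fin n)) (lam : ℝ → EuclideanSpace ℝ (Fin m)) : Prop :=
  (∀ t ∈ Icc a b, DifferentiableAt ℝ x t ∧ DifferentiableAt ℝ u t ∧
      DifferentiableAt ℝ ψ t ∧ DifferentiableAt ℝ lam t) ∧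
  (∀ t ∈ Icc a b, deriv x t = φ (t, x t, u t)) ∧
  (∀ t ∈ Icc a b, ∀ v : EuclideanSpace ℝ (Fin n),
      ⟪deriv ψ t, v⟫ =
        -(ψ₀ * fderiv ℝ L (t, x t, u t) (0, v, 0)
          + ⟪ψ t, fderiv ℝ φ (t, x t, u t) (0, v, 0)⟫
          + ⟪lam t, fderiv ℝ ϕ (t, x t, u t) (0, v, 0)⟫)) ∧
  (∀ t ∈ Icc a b, ∀ v : EuclideanSpace ℝ (Fin r),
      ψ₀ * fderiv ℝ L (t, x t, u t) (0, 0, v)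
        + ⟪ψ t, fderiv ℝ φ (t, x t, u t) (0, 0, v)⟫
        + ⟪lam t, fderiv ℝ ϕ (t, x t, u t) (0, 0, v)⟫ = 0) ∧
  (∀ t ∈ Icc a b,
      deriv (fun τ => Ham L φ ϕ τ (x τ) (u τ) ψ₀ (ψ τ) (lam τ)) t =
        ψ₀ * fderiv ℝ L (t, x t, u t) (1, 0, 0)
          + ⟪ψ t, fderiv ℝ φ (t, x t, u t) (1, 0, 0)⟫
          + ⟪lam t, fderiv ℝ ϕ (t, x t, u t) (1, 0, 0)⟫)

/-!
Differentiating `⟨ψ, b⟩ − H·a` gives `⟨ψ, ḃ⟩ + ⟨ψ̇, b⟩ − Ḣ·a − H·ȧ`. The adjoint equation tested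
against `b` turns `⟨ψ̇, b⟩` into `−∂H/∂x · b`, and along an extremal `Ḣ = ∂H/∂t`, so the derivative
is exactly minus the left-hand side of (12) and vanishes. Constancy on `[a,b]` then follows from
the mean value inequality.
-/

theorem ContinuousLinearMap.map_mk_zero_zero_eq_smul {E F G : Type*} [NormedAddCommGroup E]
    [NormedSpace ℝ E] [NormedAddCommGroup F] [NormedSpace ℝ F] [NormedAddCommGroup G]
    [NormedSpace ℝ G] (f : ℝ × E × F →L[ℝ] G) (s : ℝ) :
    f (s, 0, 0) = s • f (1, 0, 0) := by
  rw [← map_smul, Prod.smul_mk, Prod.smul_mk, smul_eq_mul, mul_one, smul_zero, smul_zero]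

theorem exists_eq_const_on_Icc_of_hasDerivAt_zero {E : Type*} [NormedAddCommGroup E]
    [NormedSpace ℝ E] {f : ℝ → E} {a b : ℝ} (hf : ∀ t ∈ Icc a b, HasDerivAt f 0 t) :
    ∃ C, ∀ t ∈ Icc a b, f t = C :=
  ⟨f a, constant_of_has_deriv_right_zero
    (fun t ht => (hf t ht).continuousAt.continuousWithinAt)
    (fun t ht => (hf t (Ico_subset_Icc_self ht)).hasDerivWithinAt)⟩

theorem Differentiable.comp_graph {E F G : Type*} [NormedAddCommGroup E] [NormedSpace ℝ E]
    [NormedAddCommGroup F] [NormedSpace ℝ F] [NormedAddCommGroup G] [NormedSpace ℝ G]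
    {g : ℝ × E × F → G} {x : ℝ → E} {u : ℝ → F} {t : ℝ} (hg : Differentiable ℝ g)
    (hx : DifferentiableAt ℝ x t) (hu : DifferentiableAt ℝ u t) :
    DifferentiableAt ℝ (fun τ => g (τ, x τ, u τ)) t :=
  (hg _).comp t (differentiableAt_id.prodMk (hx.prodMk hu))

section Noether

variable {n r m : ℕ}
    {L : ℝ × EuclideanSpace ℝ (Fin n) × EuclideanSpace ℝ (Fin r) → ℝ}
    {φ : ℝ × EuclideanSpace ℝ (Fin n) × EuclideanSpace ℝ (Fin r) → EuclideanSpace ℝ (Fin n)}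
    {ϕ : ℝ × EuclideanSpace ℝ (Fin n) × EuclideanSpace ℝ (Fin r) → EuclideanSpace ℝ (Fin m)}
    {x : ℝ → EuclideanSpace ℝ (Fin n)} {u : ℝ → EuclideanSpace ℝ (Fin r)}
    {ψ₀ : ℝ} {ψ : ℝ → EuclideanSpace ℝ (Fin n)} {lam : ℝ → EuclideanSpace ℝ (Fin m)}
    {aF : ℝ → ℝ} {bF : ℝ → EuclideanSpace ℝ (Fin n)} {t : ℝ}

variable (L φ ϕ x u ψ₀ ψ lam aF bF) in
noncomputable def noetherCharge (τ : ℝ) : ℝ :=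
  ⟪ψ τ, bF τ⟫ - Ham L φ ϕ τ (x τ) (u τ) ψ₀ (ψ τ) (lam τ) * aF τ

theorem differentiableAt_ham_comp (hL : Differentiable ℝ L) (hφ : Differentiable ℝ φ)
    (hϕ : Differentiable ℝ ϕ) (hx : DifferentiableAt ℝ x t) (hu : DifferentiableAt ℝ u t)
    (hψ : DifferentiableAt ℝ ψ t) (hlam : DifferentiableAt ℝ lam t) :
    DifferentiableAt ℝ (fun τ => Ham L φ ϕ τ (x τ) (u τ) ψ₀ (ψ τ) (lam τ)) t :=
  (((differentiableAt_const ψ₀).mul (hL.comp_graph hx hu)).add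
    (hψ.inner ℝ (hφ.comp_graph hx hu))).add (hlam.inner ℝ (hϕ.comp_graph hx hu))

theorem hasDerivAt_noetherCharge
    (hH : DifferentiableAt ℝ (fun τ => Ham L φ ϕ τ (x τ) (u τ) ψ₀ (ψ τ) (lam τ)) t)
    (hψ : DifferentiableAt ℝ ψ t) (ha : DifferentiableAt ℝ aF t)
    (hb : DifferentiableAt ℝ bF t) :
    HasDerivAt (noetherCharge L φ ϕ x u ψ₀ ψ lam aF bF)
      (⟪ψ t, deriv bF t⟫ + ⟪deriv ψ t, bF t⟫
        - (deriv (fun τ => Ham L φ ϕ τ (x τ) (u τ) ψ₀ (ψ τ) (lam τ)) t * aF t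
          + Ham L φ ϕ t (x t) (u t) ψ₀ (ψ t) (lam t) * deriv aF t)) t :=
  (hψ.hasDerivAt.inner ℝ hb.hasDerivAt).sub (hH.hasDerivAt.mul ha.hasDerivAt)

end Noether

theorem noether_final_step_general
    {n r m : ℕ}
    (L : ℝ × EuclideanSpace ℝ (Fin n) × EuclideanSpace ℝ (Fin r) → ℝ)
    (φ : ℝ × EuclideanSpace ℝ (Fin n) × EuclideanSpace ℝ (Fin r) → EuclideanSpace ℝ (Fin n))
    (ϕ : ℝ × EuclideanSpace ℝ (Fin n) × EuclideanSpace ℝ (Fin r) → EuclideanSpace ℝ (Fin m))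
    (hL : ContDiff ℝ 1 L) (hφ : ContDiff ℝ 1 φ) (hϕ : ContDiff ℝ 1 ϕ)
    (a b : ℝ)
    (x : ℝ → EuclideanSpace ℝ (Fin n)) (u : ℝ → EuclideanSpace ℝ (Fin r))
    (ψ₀ : ℝ) (ψ : ℝ → EuclideanSpace ℝ (Fin n)) (lam : ℝ → EuclideanSpace ℝ (Fin m))
    (hext : IsPontryaginExtremal L φ ϕ a b x u ψ₀ ψ lam)
    (aF : ℝ → ℝ) (bF : ℝ → EuclideanSpace ℝ (Fin n))
    (haF : ∀ t ∈ Icc a b, DifferentiableAt ℝ aF t)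
    (hbF : ∀ t ∈ Icc a b, DifferentiableAt ℝ bF t)
    -- the combined identity (12)
    (hid : ∀ t ∈ Icc a b,
      ψ₀ * (fderiv ℝ L (t, x t, u t) (aF t, 0, 0)
            + fderiv ℝ L (t, x t, u t) (0, bF t, 0)
            + L (t, x t, u t) * deriv aF t)
        + ⟪ψ t, fderiv ℝ φ (t, x t, u t) (aF t, 0, 0)
            + fderiv ℝ φ (t, x t, u t) (0, bF t, 0)
            + (deriv aF t) • φ (t, x t, u t)
            - deriv bF t⟫
        + ⟪lam t, fderiv ℝ ϕ (t, x t, u t) (aF t, 0, 0)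
            + fderiv ℝ ϕ (t, x t, u t) (0, bF t, 0)
            + (deriv aF t) • ϕ (t, x t, u t)⟫ = 0) :
    (∀ t ∈ Icc a b,
      deriv (fun τ =>
        ⟪ψ τ, bF τ⟫ - Ham L φ ϕ τ (x τ) (u τ) ψ₀ (ψ τ) (lam τ) * aF τ) t = 0)
    ∧
    ∃ C : ℝ, ∀ t ∈ Icc a b,
      ⟪ψ t, bF t⟫ - Ham L φ ϕ t (x t) (u t) ψ₀ (ψ t) (lam t) * aF t = C := by
  obtain ⟨hdiff, -, hadj, -, hHt⟩ := hext
  have hconserved : ∀ t ∈ Icc a b,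
      HasDerivAt (noetherCharge L φ ϕ x u ψ₀ ψ lam aF bF) 0 t := by
    intro t ht
    obtain ⟨hx, hu, hψ, hlam⟩ := hdiff t ht
    have hH := differentiableAt_ham_comp (ψ₀ := ψ₀) (hL.differentiable one_ne_zero)
      (hφ.differentiable one_ne_zero) (hϕ.differentiable one_ne_zero) hx hu hψ hlam
    convert hasDerivAt_noetherCharge hH hψ (haF t ht) (hbF t ht) using 1
    have h12 := hid t ht
    simp only [ContinuousLinearMap.map_mk_zero_zero_eq_smul _ (aF t), smul_eq_mul, inner_add_right,
      inner_sub_right, real_inner_smul_right] at h12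
    rw [hHt t ht, hadj t ht (bF t), Ham]
    linear_combination h12
  exact ⟨fun t ht => (hconserved t ht).deriv, exists_eq_const_on_Icc_of_hasDerivAt_zero hconserved⟩

/-- **Final step of the proof of Theorem 2.** Along a Pontryagin extremal, if
`a(t) := ∂T/∂s|₀` and `b(t) := ∂X/∂s|₀` satisfy the combined identity (12),
then `(d/dt)[⟨ψ(t), b(t)⟩ − H·a(t)] = 0`, hence `⟨ψ(t), b(t)⟩ − H·a(t)`
is constant on `[a,b]`. -/
theorem noether_final_step
    {n r m : ℕ}
    (L : ℝ × EuclideanSpace ℝ (Fin n) × EuclideanSpace ℝ (Fin r) → ℝ)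
    (φ : ℝ × EuclideanSpace ℝ (Fin n) × EuclideanSpace ℝ (Fin r) → EuclideanSpace ℝ (Fin n))
    (ϕ : ℝ × EuclideanSpace ℝ (Fin n) × EuclideanSpace ℝ (Fin r) → EuclideanSpace ℝ (Fin m))
    (hL : ContDiff ℝ 1 L) (hφ : ContDiff ℝ 1 φ) (hϕ : ContDiff ℝ 1 ϕ)
    (a b : ℝ) (hab : a < b)
    (x : ℝ → EuclideanSpace ℝ (Fin n)) (u : ℝ → EuclideanSpace ℝ (Fin r))
    (ψ₀ : ℝ) (ψ : ℝ → EuclideanSpace ℝ (Fin n)) (lam : ℝ → EuclideanSpace ℝ (Fin m))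
    (hext : IsPontryaginExtremal L φ ϕ a b x u ψ₀ ψ lam)
    (aF : ℝ → ℝ) (bF : ℝ → EuclideanSpace ℝ (Fin n))
    (haF : ∀ t ∈ Icc a b, DifferentiableAt ℝ aF t)
    (hbF : ∀ t ∈ Icc a b, DifferentiableAt ℝ bF t)
    -- the combined identity (12)
    (hid : ∀ t ∈ Icc a b,
      ψ₀ * (fderiv ℝ L (t, x t, u t) (aF t, 0, 0)
            + fderiv ℝ L (t, x t, u t) (0, bF t, 0)
            + L (t, x t, u t) * deriv aF t)
        + ⟪ψ t, fderiv ℝ φ (t, x t, u t) (aF t, 0, 0)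
            + fderiv ℝ φ (t, x t, u t) (0, bF t, 0)
            + (deriv aF t) • φ (t, x t, u t)
            - deriv bF t⟫
        + ⟪lam t, fderiv ℝ ϕ (t, x t, u t) (aF t, 0, 0)
            + fderiv ℝ ϕ (t, x t, u t) (0, bF t, 0)
            + (deriv aF t) • ϕ (t, x t, u t)⟫ = 0) :
    (∀ t ∈ Icc a b,
      deriv (fun τ =>
        ⟪ψ τ, bF τ⟫ - Ham L φ ϕ τ (x τ) (u τ) ψ₀ (ψ τ) (lam τ) * aF τ) t = 0)
    ∧
    ∃ C : ℝ, ∀ t ∈ Icc a b,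
      ⟪ψ t, bF t⟫ - Ham L φ ϕ t (x t) (u t) ψ₀ (ψ t) (lam t) * aF t = C :=
  noether_final_step_general L φ ϕ hL hφ hϕ a b x u ψ₀ ψ lam hext aF bF haF hbF hid
end

section
/- Combined multiplier identity (equation (11) of the proof of Theorem 2): Let x(·), u(·), ψ(·), λ(·) be differentiable on [a,b], ψ₀ ∈ ℝ, and let (T, X, U) be a C²-smooth one-parameter family with (T,X,U)(t,x,u,0) = (t,x,u). Suppose the three invariance conditions hold along (x(·),u(·)): L = (L∘hˢ)·(d/dt)T, (d/dt)X = (φ∘hˢ)·(d/dt)T, and ϕ = (ϕ∘hˢ)·(d/dt)T for all s ∈ (−ε,ε), t ∈ [a,b]. Then for all t ∈ [a,b]: ψ₀·[(∂L/∂t)·a + ⟨∂L/∂x, b⟩ + ⟨∂L/∂u, c⟩ + L·ȧ] + ⟨ψ(t), (∂φ/∂t)·a + (∂φ/∂x)·b + (∂φ/∂u)·c + φ·ȧ − ḃ⟩ + ⟨λ(t), (∂ϕ/∂t)·a + (∂ϕ/∂x)·b + (∂ϕ/∂u)·c + ϕ·ȧ⟩ = 0, where a = (∂T/∂s)|_{s=0},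 b = (∂X/∂s)|_{s=0}, c = (∂U/∂s)|_{s=0} evaluated at (t,x(t),u(t),0), ȧ and ḃ are their total time derivatives, and the partial derivatives of L, φ, ϕ are evaluated at (t,x(t),u(t)). -/
/-!
Each of the three brackets vanishes on its own: it is the `s`-derivative at `s = 0` of the
corresponding invariance condition. Since `(T, X, U)(·, 0)` is the identity, the time derivative
of `T` along the curve equals `1` at `s = 0`, and by the symmetry of the second derivatives of
`T` and `X` the `s`-derivatives of the time derivatives of `T` and `X` are `ȧ` and `ḃ`.
-/

open Set Filter Topology RealInnerProductSpace

section

variable {E F : Type*} [NormedAddCommGroup E] [NormedSpace ℝ E]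
  [NormedAddCommGroup F] [NormedSpace ℝ F]

theorem hasDerivAt_comp_prodMk_const {G : E × ℝ → F} {γ : ℝ → E} {v : E} {t s : ℝ}
    (hG : DifferentiableAt ℝ G (γ t, s)) (hγ : HasDerivAt γ v t) :
    HasDerivAt (fun τ => G (γ τ, s)) (fderiv ℝ G (γ t, s) (v, 0)) t :=
  hG.hasFDerivAt.comp_hasDerivAt t (hγ.prodMk (hasDerivAt_const t s))

theorem hasDerivAt_comp_const_prodMk {G : E × ℝ → F} {p : E} {s : ℝ}
    (hG : DifferentiableAt ℝ G (p, s)) :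
    HasDerivAt (fun s => G (p, s)) (fderiv ℝ G (p, s) (0, 1)) s :=
  hG.hasFDerivAt.comp_hasDerivAt s ((hasDerivAt_const s p).prodMk (hasDerivAt_id s))

theorem ContDiff.hasDerivAt_fderiv_apply_comp {G : E → F} (hG : ContDiff ℝ 2 G)
    {c : ℝ → E} {c' : E} {t : ℝ} (hc : HasDerivAt c c' t) (w : E) :
    HasDerivAt (fun τ => fderiv ℝ G (c τ) w) (fderiv ℝ (fderiv ℝ G) (c t) c' w) t :=
  (ContinuousLinearMap.apply ℝ F w).hasFDerivAt.comp_hasDerivAt t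
    (((hG.fderiv_right (m := 1) le_rfl).differentiable one_ne_zero _).hasFDerivAt.comp_hasDerivAt
      t hc)

theorem ContDiff.hasDerivAt_deriv_comp_prodMk {G : E × ℝ → F} (hG : ContDiff ℝ 2 G)
    {γ : ℝ → E} {v : E} {t : ℝ} (hγ : HasDerivAt γ v t) (s₀ : ℝ) :
    HasDerivAt (fun s => deriv (fun τ => G (γ τ, s)) t)
      (deriv (fun τ => deriv (fun s => G (γ τ, s)) s₀) t) s₀ := by
  have hG₁ : Differentiable ℝ G := hG.differentiable two_ne_zero
  have velocity : (fun s => deriv (fun τ => G (γ τ, s)) t) =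
      fun s => fderiv ℝ G (γ t, s) (v, 0) :=
    funext fun s => (hasDerivAt_comp_prodMk_const (hG₁ _) hγ).deriv
  have param_deriv : (fun τ => deriv (fun s => G (γ τ, s)) s₀) =
      fun τ => fderiv ℝ G (γ τ, s₀) (0, 1) :=
    funext fun τ => (hasDerivAt_comp_const_prodMk (hG₁ _)).deriv
  rw [velocity, param_deriv,
    (hG.hasDerivAt_fderiv_apply_comp (hγ.prodMk (hasDerivAt_const t s₀)) _).deriv,
    hG.contDiffAt.isSymmSndFDerivAt (by simp)]
  exact hG.hasDerivAt_fderiv_apply_comp ((hasDerivAt_const s₀ _).prodMk (hasDerivAt_id s₀)) _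

theorem hasDerivAt_smul_comp_of_eq_one {f : E → F} {H : ℝ → E} {α : ℝ → ℝ}
    {q w : E} {α' s₀ : ℝ} (hf : DifferentiableAt ℝ f q) (hH : HasDerivAt H w s₀)
    (hH₀ : H s₀ = q) (hα : HasDerivAt α α' s₀) (hα₀ : α s₀ = 1) :
    HasDerivAt (fun s => α s • f (H s)) (fderiv ℝ f q w + α' • f q) s₀ := by
  subst hH₀
  have h := hα.smul (hf.hasFDerivAt.comp_hasDerivAt s₀ hH)
  rw [hα₀, one_smul] at h
  exact h

theorem fderiv_add_smul_eq_of_eventuallyEq {f : E → F} {H : ℝ → E} {α : ℝ → ℝ} {g : ℝ → F}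
    {q w : E} {α' s₀ : ℝ} {g' : F} (hf : DifferentiableAt ℝ f q) (hH : HasDerivAt H w s₀)
    (hH₀ : H s₀ = q) (hα : HasDerivAt α α' s₀) (hα₀ : α s₀ = 1) (hg : HasDerivAt g g' s₀)
    (hfg : ∀ᶠ s in 𝓝 s₀, α s • f (H s) = g s) :
    fderiv ℝ f q w + α' • f q = g' :=
  (hasDerivAt_smul_comp_of_eq_one hf hH hH₀ hα hα₀).unique (hg.congr_of_eventuallyEq hfg)

end

theorem ContinuousLinearMap.apply_prodMk_prodMk {R A B C M : Type*} [Semiring R]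
    [AddCommMonoid A] [TopologicalSpace A] [AddCommMonoid B] [TopologicalSpace B]
    [AddCommMonoid C] [TopologicalSpace C] [Module R A] [Module R B] [Module R C]
    [AddCommMonoid M] [TopologicalSpace M] [Module R M] (ℓ : A × B × C →L[R] M) (a : A) (b : B) (c : C) :
    ℓ (a, b, c) = ℓ (a, 0, 0) + ℓ (0, b, 0) + ℓ (0, 0, c) := by
  simp only [← map_add, Prod.mk_add_mk, add_zero, zero_add]

theorem combined_multiplier_identity_general
    {n r m : ℕ}
    (L : ℝ × EuclideanSpace ℝ (Fin n) × EuclideanSpace ℝ (Fin r) → ℝ)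
    (φ : ℝ × EuclideanSpace ℝ (Fin n) × EuclideanSpace ℝ (Fin r) → EuclideanSpace ℝ (Fin n))
    (ϕ : ℝ × EuclideanSpace ℝ (Fin n) × EuclideanSpace ℝ (Fin r) → EuclideanSpace ℝ (Fin m))
    (hL : ContDiff ℝ 1 L) (hφ : ContDiff ℝ 1 φ) (hϕ : ContDiff ℝ 1 ϕ)
    (a b : ℝ)
    (x : ℝ → EuclideanSpace ℝ (Fin n)) (u : ℝ → EuclideanSpace ℝ (Fin r))
    (ψ₀ : ℝ) (ψ : ℝ → EuclideanSpace ℝ (Fin n)) (lam : ℝ → EuclideanSpace ℝ (Fin m))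
    (hx : ∀ t ∈ Icc a b, DifferentiableAt ℝ x t)
    (hu : ∀ t ∈ Icc a b, DifferentiableAt ℝ u t)
    (ε : ℝ) (hε : 0 < ε)
    (T : (ℝ × EuclideanSpace ℝ (Fin n) × EuclideanSpace ℝ (Fin r)) × ℝ → ℝ)
    (X : (ℝ × EuclideanSpace ℝ (Fin n) × EuclideanSpace ℝ (Fin r)) × ℝ →
        EuclideanSpace ℝ (Fin n))
    (U : (ℝ × EuclideanSpace ℝ (Fin n) × EuclideanSpace ℝ (Fin r)) × ℝ →
        EuclideanSpace ℝ (Fin r))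
    (hT : ContDiff ℝ 2 T) (hX : ContDiff ℝ 2 X) (hU : ContDiff ℝ 2 U)
    (hT0 : ∀ p : ℝ × EuclideanSpace ℝ (Fin n) × EuclideanSpace ℝ (Fin r), T (p, 0) = p.1)
    (hX0 : ∀ p : ℝ × EuclideanSpace ℝ (Fin n) × EuclideanSpace ℝ (Fin r), X (p, 0) = p.2.1)
    (hU0 : ∀ p : ℝ × EuclideanSpace ℝ (Fin n) × EuclideanSpace ℝ (Fin r), U (p, 0) = p.2.2)
    -- the three invariance conditions along (x(·), u(·))
    (hinvL : ∀ s ∈ Ioo (-ε) ε, ∀ t ∈ Icc a b,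
      L (t, x t, u t) =
        L (T ((t, x t, u t), s), X ((t, x t, u t), s), U ((t, x t, u t), s)) *
          deriv (fun τ => T ((τ, x τ, u τ), s)) t)
    (hinvφ : ∀ s ∈ Ioo (-ε) ε, ∀ t ∈ Icc a b,
      deriv (fun τ => X ((τ, x τ, u τ), s)) t =
        (deriv (fun τ => T ((τ, x τ, u τ), s)) t) •
          φ (T ((t, x t, u t), s), X ((t, x t, u t), s), U ((t, x t, u t), s)))
    (hinvϕ : ∀ s ∈ Ioo (-ε) ε, ∀ t ∈ Icc a b,
      ϕ (t, x t, u t) =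
        (deriv (fun τ => T ((τ, x τ, u τ), s)) t) •
          ϕ (T ((t, x t, u t), s), X ((t, x t, u t), s), U ((t, x t, u t), s))) :
    ∀ t ∈ Icc a b,
      ψ₀ * (fderiv ℝ L (t, x t, u t)
              (deriv (fun s => T ((t, x t, u t), s)) 0, 0, 0)
            + fderiv ℝ L (t, x t, u t)
              (0, deriv (fun s => X ((t, x t, u t), s)) 0, 0)
            + fderiv ℝ L (t, x t, u t)
              (0, 0, deriv (fun s => U ((t, x t, u t), s)) 0)
            + L (t, x t, u t) *
                deriv (fun τ => deriv (fun s => T ((τ, x τ, u τ), s)) 0) t)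
      + ⟪ψ t,
          fderiv ℝ φ (t, x t, u t)
              (deriv (fun s => T ((t, x t, u t), s)) 0, 0, 0)
            + fderiv ℝ φ (t, x t, u t)
              (0, deriv (fun s => X ((t, x t, u t), s)) 0, 0)
            + fderiv ℝ φ (t, x t, u t)
              (0, 0, deriv (fun s => U ((t, x t, u t), s)) 0)
            + (deriv (fun τ => deriv (fun s => T ((τ, x τ, u τ), s)) 0) t) •
                φ (t, x t, u t)
            - deriv (fun τ => deriv (fun s => X ((τ, x τ, u τ), s)) 0) t⟫
      + ⟪lam t,
          fderiv ℝ ϕ (t, x t, u t)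
              (deriv (fun s => T ((t, x t, u t), s)) 0, 0, 0)
            + fderiv ℝ ϕ (t, x t, u t)
              (0, deriv (fun s => X ((t, x t, u t), s)) 0, 0)
            + fderiv ℝ ϕ (t, x t, u t)
              (0, 0, deriv (fun s => U ((t, x t, u t), s)) 0)
            + (deriv (fun τ => deriv (fun s => T ((τ, x τ, u τ), s)) 0) t) •
                ϕ (t, x t, u t)⟫ = 0 := by
  intro t ht
  have hγ : HasDerivAt (fun τ => (τ, x τ, u τ)) (1, deriv x t, deriv u t) t :=
    (hasDerivAt_id t).prodMk ((hx t ht).hasDerivAt.prodMk (hu t ht).hasDerivAt)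
  have hTd := hT.differentiable two_ne_zero
  have hXd := hX.differentiable two_ne_zero
  have hUd := hU.differentiable two_ne_zero
  set q := (t, x t, u t)
  set vT := deriv (fun s => T (q, s)) 0
  set vX := deriv (fun s => X (q, s)) 0
  set vU := deriv (fun s => U (q, s)) 0
  set vT' := deriv (fun τ => deriv (fun s => T ((τ, x τ, u τ), s)) 0) t
  set vX' := deriv (fun τ => deriv (fun s => X ((τ, x τ, u τ), s)) 0) t
  have hα : HasDerivAt (fun s => deriv (fun τ => T ((τ, x τ, u τ), s)) t) vT' 0 :=
    hT.hasDerivAt_deriv_comp_prodMk hγ 0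
  have hβ : HasDerivAt (fun s => deriv (fun τ => X ((τ, x τ, u τ), s)) t) vX' 0 :=
    hX.hasDerivAt_deriv_comp_prodMk hγ 0
  have hα₀ : deriv (fun τ => T ((τ, x τ, u τ), 0)) t = 1 := by
    simp only [hT0, deriv_id'']
  have hH : HasDerivAt (fun s => (T (q, s), X (q, s), U (q, s))) (vT, vX, vU) 0 :=
    (hasDerivAt_deriv_iff.2 (by fun_prop)).prodMk
      ((hasDerivAt_deriv_iff.2 (by fun_prop)).prodMk (hasDerivAt_deriv_iff.2 (by fun_prop)))
  have hH₀ : (T (q, 0), X (q, 0), U (q, 0)) = q := by rw [hT0, hX0, hU0]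
  have near_zero : ∀ᶠ s in 𝓝 0, s ∈ Ioo (-ε) ε := Ioo_mem_nhds (neg_neg_of_pos hε) hε
  have varL : fderiv ℝ L q (vT, vX, vU) + vT' • L q = 0 :=
    fderiv_add_smul_eq_of_eventuallyEq (hL.differentiable one_ne_zero q) hH hH₀ hα hα₀
      (hasDerivAt_const 0 (L q)) <| near_zero.mono fun s hs => by
        rw [smul_eq_mul, mul_comm]; exact (hinvL s hs t ht).symm
  have varφ : fderiv ℝ φ q (vT, vX, vU) + vT' • φ q = vX' :=
    fderiv_add_smul_eq_of_eventuallyEq (hφ.differentiable one_ne_zero q) hH hH₀ hα hα₀ hβ <|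
      near_zero.mono fun s hs => (hinvφ s hs t ht).symm
  have varϕ : fderiv ℝ ϕ q (vT, vX, vU) + vT' • ϕ q = 0 :=
    fderiv_add_smul_eq_of_eventuallyEq (hϕ.differentiable one_ne_zero q) hH hH₀ hα hα₀
      (hasDerivAt_const 0 (ϕ q)) <| near_zero.mono fun s hs => (hinvϕ s hs t ht).symm
  rw [← ContinuousLinearMap.apply_prodMk_prodMk (fderiv ℝ L q),
    ← ContinuousLinearMap.apply_prodMk_prodMk (fderiv ℝ φ q),
    ← ContinuousLinearMap.apply_prodMk_prodMk (fderiv ℝ ϕ q),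
    mul_comm (L q), ← smul_eq_mul vT', varL, varφ, varϕ]
  simp

/-- **Combined multiplier identity** (equation (11) of the proof of Theorem 2).
If the three invariance conditions hold along `(x(·),u(·))`, then multiplying
the differentiated identities by `ψ₀`, `ψ(t)`, `λ(t)` and adding yields, with
`a = ∂T/∂s|₀`, `b = ∂X/∂s|₀`, `c = ∂U/∂s|₀`:
`ψ₀·[(∂L/∂t)·a + ⟨∂L/∂x, b⟩ + ⟨∂L/∂u, c⟩ + L·ȧ]
 + ⟨ψ, (∂φ/∂t)·a + (∂φ/∂x)·b + (∂φ/∂u)·c + φ·ȧ − ḃ⟩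
 + ⟨λ, (∂ϕ/∂t)·a + (∂ϕ/∂x)·b + (∂ϕ/∂u)·c + ϕ·ȧ⟩ = 0`. -/
theorem combined_multiplier_identity
    {n r m : ℕ}
    (L : ℝ × EuclideanSpace ℝ (Fin n) × EuclideanSpace ℝ (Fin r) → ℝ)
    (φ : ℝ × EuclideanSpace ℝ (Fin n) × EuclideanSpace ℝ (Fin r) → EuclideanSpace ℝ (Fin n))
    (ϕ : ℝ × EuclideanSpace ℝ (Fin n) × EuclideanSpace ℝ (Fin r) → EuclideanSpace ℝ (Fin m))
    (hL : ContDiff ℝ 1 L) (hφ : ContDiff ℝ 1 φ) (hϕ : ContDiff ℝ 1 ϕ)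
    (a b : ℝ) (hab : a < b)
    (x : ℝ → EuclideanSpace ℝ (Fin n)) (u : ℝ → EuclideanSpace ℝ (Fin r))
    (ψ₀ : ℝ) (ψ : ℝ → EuclideanSpace ℝ (Fin n)) (lam : ℝ → EuclideanSpace ℝ (Fin m))
    (hx : ∀ t ∈ Icc a b, DifferentiableAt ℝ x t)
    (hu : ∀ t ∈ Icc a b, DifferentiableAt ℝ u t)
    (hψ : ∀ t ∈ Icc a b, DifferentiableAt ℝ ψ t)
    (hlam : ∀ t ∈ Icc a b, DifferentiableAt ℝ lam t)
    (ε : ℝ) (hε : 0 < ε)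
    (T : (ℝ × EuclideanSpace ℝ (Fin n) × EuclideanSpace ℝ (Fin r)) × ℝ → ℝ)
    (X : (ℝ × EuclideanSpace ℝ (Fin n) × EuclideanSpace ℝ (Fin r)) × ℝ →
        EuclideanSpace ℝ (Fin n))
    (U : (ℝ × EuclideanSpace ℝ (Fin n) × EuclideanSpace ℝ (Fin r)) × ℝ →
        EuclideanSpace ℝ (Fin r))
    (hT : ContDiff ℝ 2 T) (hX : ContDiff ℝ 2 X) (hU : ContDiff ℝ 2 U)
    (hT0 : ∀ p : ℝ × EuclideanSpace ℝ (Fin n) × EuclideanSpace ℝ (Fin r), T (p, 0) = p.1)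
    (hX0 : ∀ p : ℝ × EuclideanSpace ℝ (Fin n) × EuclideanSpace ℝ (Fin r), X (p, 0) = p.2.1)
    (hU0 : ∀ p : ℝ × EuclideanSpace ℝ (Fin n) × EuclideanSpace ℝ (Fin r), U (p, 0) = p.2.2)
    -- the three invariance conditions along (x(·), u(·))
    (hinvL : ∀ s ∈ Ioo (-ε) ε, ∀ t ∈ Icc a b,
      L (t, x t, u t) =
        L (T ((t, x t, u t), s), X ((t, x t, u t), s), U ((t, x t, u t), s)) *
          deriv (fun τ => T ((τ, x τ, u τ), s)) t)
    (hinvφ : ∀ s ∈ Ioo (-ε) ε, ∀ t ∈ Icc a b,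
      deriv (fun τ => X ((τ, x τ, u τ), s)) t =
        (deriv (fun τ => T ((τ, x τ, u τ), s)) t) •
          φ (T ((t, x t, u t), s), X ((t, x t, u t), s), U ((t, x t, u t), s)))
    (hinvϕ : ∀ s ∈ Ioo (-ε) ε, ∀ t ∈ Icc a b,
      ϕ (t, x t, u t) =
        (deriv (fun τ => T ((τ, x τ, u τ), s)) t) •
          ϕ (T ((t, x t, u t), s), X ((t, x t, u t), s), U ((t, x t, u t), s))) :
    ∀ t ∈ Icc a b,
      ψ₀ * (fderiv ℝ L (t, x t, u t)
              (deriv (fun s => T ((t, x t, u t), s)) 0, 0, 0)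
            + fderiv ℝ L (t, x t, u t)
              (0, deriv (fun s => X ((t, x t, u t), s)) 0, 0)
            + fderiv ℝ L (t, x t, u t)
              (0, 0, deriv (fun s => U ((t, x t, u t), s)) 0)
            + L (t, x t, u t) *
                deriv (fun τ => deriv (fun s => T ((τ, x τ, u τ), s)) 0) t)
      + ⟪ψ t,
          fderiv ℝ φ (t, x t, u t)
              (deriv (fun s => T ((t, x t, u t), s)) 0, 0, 0)
            + fderiv ℝ φ (t, x t, u t)
              (0, deriv (fun s => X ((t, x t, u t), s)) 0, 0)
            + fderiv ℝ φ (t, x t, u t)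
              (0, 0, deriv (fun s => U ((t, x t, u t), s)) 0)
            + (deriv (fun τ => deriv (fun s => T ((τ, x τ, u τ), s)) 0) t) •
                φ (t, x t, u t)
            - deriv (fun τ => deriv (fun s => X ((τ, x τ, u τ), s)) 0) t⟫
      + ⟪lam t,
          fderiv ℝ ϕ (t, x t, u t)
              (deriv (fun s => T ((t, x t, u t), s)) 0, 0, 0)
            + fderiv ℝ ϕ (t, x t, u t)
              (0, deriv (fun s => X ((t, x t, u t), s)) 0, 0)
            + fderiv ℝ ϕ (t, x t, u t)
              (0, 0, deriv (fun s => U ((t, x t, u t), s)) 0)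
            + (deriv (fun τ => deriv (fun s => T ((τ, x τ, u τ), s)) 0) t) •
                ϕ (t, x t, u t)⟫ = 0 :=
  combined_multiplier_identity_general L φ ϕ hL hφ hϕ a b x u ψ₀ ψ lam hx hu ε hε T X U hT hX hU hT0
    hX0 hU0 hinvL hinvφ hinvϕ
end
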